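/- In the BP encoding of a binary tree, the i-th opening parenthesis corresponds to the i-th node in preorder, and the i-th closing parenthesis corresponds to the i-th node in inorder. -/
import Mathlib


/-- A binary tree: `leaf` is the empty tree; each internal node has an
optional left and an optional right subtree (possibly `leaf`). -/
inductive BinTree : Type where
  | leaf : BinTree
  | node : BinTree → BinTree → BinTree
deriving DecidableEq

namespace BinTree

/-- Number of nodes of a binary tree. -/
def size : BinTree → ℕ
  | leaf => 0
  | node l r => l.size + r.size + 1

/-- BalancedBP-parenthesis encoding of binary trees:
`BP(empty) = ε`, `BP(t) = '(' ++ BP(t_l) ++ ')' ++ BP(t_r)`.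
`true` is an opening parenthesis, `false` a closing one. -/
def bp : BinTree → List Bool
  | leaf => []
  | node l r => true :: (l.bp ++ false :: r.bp)

/-- The subtree reached by following a path (`false` = left, `true` = right). -/
def subtreeAt : BinTree → List Bool → Option BinTree
  | t, [] => some t
  | leaf, _ :: _ => none
  | node l _, false :: p => subtreeAt l p
  | node _ r, true :: p => subtreeAt r p

/-- A path identifies an actual node of the tree (not an empty slot). -/
def ValidPath (t : BinTree) (p : List Bool) : Prop :=
  ∃ l r, subtreeAt t p = some (node l r)

/-- Index (0-based) of the opening parenthesis of the node at a path. -/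
def openIdx : BinTree → List Bool → Option ℕ
  | leaf, _ => none
  | node _ _, [] => some 0
  | node l _, false :: p => (openIdx l p).map (· + 1)
  | node l r, true :: p => (openIdx r p).map (· + (l.bp.length + 2))

/-- Index (0-based) of the closing parenthesis of the node at a path. -/
def closeIdx : BinTree → List Bool → Option ℕ
  | leaf, _ => none
  | node l _, [] => some (l.bp.length + 1)
  | node l _, false :: p => (closeIdx l p).map (· + 1)
  | node l r, true :: p => (closeIdx r p).map (· + (l.bp.length + 2))

/-- Inorder rank (0-based) of the node at a path. -/
def inorderIdx : BinTree → List Bool → Option ℕ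
  | leaf, _ => none
  | node l _, [] => some l.size
  | node l _, false :: p => inorderIdx l p
  | node l r, true :: p => (inorderIdx r p).map (· + (l.size + 1))

end BinTree

/-- A sequence of parentheses (`true` = '(') is balanced: equally many opening
and closing parentheses, and every prefix has at least as many opening ones. -/
def BalancedBP (s : List Bool) : Prop :=
  s.count true = s.count false ∧
  ∀ k, (s.take k).count false ≤ (s.take k).count true

/-- `excess s k`: number of opening minus closing parentheses among the first `k` symbols. -/
def excess (s : List Bool) (k : ℕ) : ℤ :=
  ((s.take k).count true : ℤ) - ((s.take k).count false : ℤ)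

/-- `IsMatch s i j`: positions `i < j` form a matching pair of parentheses
(the standard stack-based matching). -/
def IsMatch (s : List Bool) (i j : ℕ) : Prop :=
  i < j ∧ j < s.length ∧ s[i]? = some true ∧ s[j]? = some false ∧
  excess s (j + 1) = excess s i ∧
  ∀ k, i < k → k ≤ j → excess s i < excess s k

/-- `EnclosePair s i v j`: `j` is the closing parenthesis whose matching pair
tightly encloses the matching pair `(i, v)`. -/
def EnclosePair (s : List Bool) (i v j : ℕ) : Prop :=
  (∃ i', IsMatch s i' j ∧ i' < i ∧ v < j) ∧
  ∀ i'' j'', IsMatch s i'' j'' → i'' < i → v < j'' → j ≤ j''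

/-- Longest common prefix of two paths. -/
def lcp : List Bool → List Bool → List Bool
  | a :: as, b :: bs => if a = b then a :: lcp as bs else []
  | _, _ => []

/-- BP encoding where each parenthesis is labelled by the subtree rooted at its node. -/
def BinTree.bpL : BinTree → List (Bool × BinTree)
  | .leaf => []
  | .node l r => (true, .node l r) :: (l.bpL ++ (false, .node l r) :: r.bpL)

/-- Preorder traversal, listing for each node the subtree rooted at it. -/
def BinTree.preorderList : BinTree → List BinTree
  | .leaf => []
  | .node l r => .node l r :: (l.preorderList ++ r.preorderList)

/-- Inorder traversal, listing for each node the subtree rooted at it. -/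
def BinTree.inorderList : BinTree → List BinTree
  | .leaf => []
  | .node l r => l.inorderList ++ .node l r :: r.inorderList

/-- in the BP encoding of a binary tree, the `i`-th opening
parenthesis corresponds to the `i`-th node in preorder, and the `i`-th closing
parenthesis to the `i`-th node in inorder. -/
theorem bp_preorder_inorder (t : BinTree) :
    ((t.bpL.filter fun q => q.1).map Prod.snd) = t.preorderList ∧
    ((t.bpL.filter fun q => !q.1).map Prod.snd) = t.inorderList := by
  induction t with
  | leaf => simp [BinTree.bpL, BinTree.preorderList, BinTree.inorderList]
  | node l r ihl ihr =>
    simp [BinTree.bpL, BinTree.preorderList, BinTree.inorderList,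
      List.filter_append, List.map_append, ihl.1, ihl.2, ihr.1, ihr.2]
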